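/- arXiv:1309.4011 — 3 statements merged into one kernel-verified Lean document; each statement's English description precedes it below -/
import Mathlib

section
/- Let P be a commutative additive monoid and let σ be the subset of the real vector space of functions P → ℝ consisting of all u with u 0 = 0, u (p + q) = u p + u q for all p, q ∈ P, and u p ≥ 0 for all p ∈ P. For every additive submonoid S of P, the subset F = {u ∈ σ | u s = 0 for all s ∈ S} is an extreme subset of σ: F ⊆ σ, and whenever a point of F lies in the open segment joining two points of σ, both of those points lie in F. -/
open Set

section

variable {𝕜 ι : Type*} [Semiring 𝕜] [PartialOrder 𝕜] [IsStrictOrderedRing 𝕜]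

theorem eq_zero_of_mul_add_mul_eq_zero {a b y z : 𝕜} (ha : 0 < a) (hb : 0 < b) (hy : 0 ≤ y)
    (hz : 0 ≤ z) (h : a * y + b * z = 0) : y = 0 := by
  have hay : a * y = 0 :=
    ((add_eq_zero_iff_of_nonneg (mul_nonneg ha.le hy) (mul_nonneg hb.le hz)).1 h).1
  by_contra hy0
  exact (mul_pos ha (hy.lt_of_ne' hy0)).ne' hay

theorem isExtreme_setOf_forall_apply_eq_zero {A : Set (ι → 𝕜)} (T : Set ι)
    (hA : ∀ x ∈ A, ∀ i ∈ T, 0 ≤ x i) : IsExtreme 𝕜 A {x ∈ A | ∀ i ∈ T, x i = 0} := by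
  refine ⟨sep_subset _ _, ?_⟩
  rintro y hy z hz x ⟨-, hx⟩ ⟨a, b, ha, hb, -, rfl⟩
  exact ⟨hy, fun i hi ↦
    eq_zero_of_mul_add_mul_eq_zero ha hb (hA y hy i hi) (hA z hz i hi) (hx i hi)⟩

end

/-- For an additive submonoid `S` of a commutative additive monoid `P`, the subset of
the cone `σ = Hom(P, ℝ≥0) ⊆ (P → ℝ)` consisting of homomorphisms vanishing on `S` is an
extreme subset (a face) of `σ`. -/
theorem isExtreme_vanishing_on_submonoid {P : Type*} [AddCommMonoid P]
    (S : AddSubmonoid P) :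
    IsExtreme ℝ
      {u : P → ℝ | u 0 = 0 ∧ (∀ p q : P, u (p + q) = u p + u q) ∧ ∀ p : P, 0 ≤ u p}
      {u : P → ℝ | (u 0 = 0 ∧ (∀ p q : P, u (p + q) = u p + u q) ∧ ∀ p : P, 0 ≤ u p) ∧
        ∀ s ∈ S, u s = 0} := by
  apply isExtreme_setOf_forall_apply_eq_zero (S : Set P)
  exact fun u hu p _ ↦ hu.2.2 p
end

section
/- Let P be a finitely generated, cancellative, torsion-free and saturated commutative additive monoid, and let I be a prime monoid ideal of P. Then there exists an additive monoid homomorphism u : P → ℝ≥0 such that u p > 0 for every p ∈ I and u p = 0 for every p ∉ I. -/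
/-!
The complement `F = P \ I` is a submonoid. Send `P` to the `ℚ`-vector space
`V = (P^gp / ⟨F⟩) ⊗ ℚ`. If some positive integer combination `q` of the generators of `P` lying
in `I` became zero in `V`, then `k • q + f₂ = f₁` in `P` for some `k ≥ 1` and `f₁, f₂ ∈ F`
(cancellativity makes `P → P^gp` injective), which is absurd since the left side lies in `I`.
So these images admit no nontrivial relation with natural coefficients, and Gordan's theorem
yields a functional on `V` positive on all of them. Composed with `P → V` it vanishes on `F`,
and it is positive on `I` because every element of `I` involves a generator lying in `I`.
-/

open scoped NNReal

/-- A monoid ideal of a commutative additive monoid `P`: a subset `I` such that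
`p + q ∈ I` whenever `p ∈ I` and `q ∈ P`. -/
def IsMonoidIdeal {P : Type*} [AddCommMonoid P] (I : Set P) : Prop :=
  ∀ p ∈ I, ∀ q : P, p + q ∈ I

/-- A prime monoid ideal: a monoid ideal whose complement is an additive submonoid. -/
def IsPrimeMonoidIdeal {P : Type*} [AddCommMonoid P] (I : Set P) : Prop :=
  IsMonoidIdeal I ∧ (0 : P) ∉ I ∧ ∀ p q : P, p ∉ I → q ∉ I → p + q ∉ I

open scoped TensorProduct

lemma Finset.exists_forall_pos_mul_add {K ι : Type*} [Field K] [LinearOrder K]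
    [IsStrictOrderedRing K] (s : Finset ι) {x : ι → K} (hx : ∀ j ∈ s, 0 < x j) (y : ι → K) :
    ∃ N : K, ∀ j ∈ s, 0 < N * x j + y j := by
  obtain ⟨M, hM⟩ := (s.image fun j => -y j / x j).exists_le
  refine ⟨M + 1, fun j hj => ?_⟩
  have := hM _ (mem_image_of_mem _ hj)
  rw [div_le_iff₀ (hx j hj)] at this
  nlinarith [hx j hj]

lemma Module.Dual.exists_apply_pos {K V : Type*} [Field K] [LinearOrder K]
    [IsStrictOrderedRing K] [AddCommGroup V] [Module K V] {v : V} (hv : v ≠ 0) :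
    ∃ φ : Module.Dual K V, 0 < φ v := by
  obtain ⟨φ, hφ⟩ : ∃ φ : Module.Dual K V, φ v ≠ 0 := by
    by_contra! h
    exact hv ((Module.forall_dual_apply_eq_zero_iff K v).mp h)
  exact ⟨(φ v)⁻¹ • φ, by simp [hφ]⟩

section Gordan

open Finset

/-- A relation modulo `v` reads `∑ j ∈ s, n j • a j = c • v`: for `c ≤ 0` it is a relation in `V`
after clearing the denominator of `c`, and for `c ≥ 0` applying `f` forces `n = 0`. -/
lemma forall_eq_zero_of_sum_nsmul_mkQ_eq_zero {V ι : Type*} [AddCommGroup V] [Module ℚ V]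
    {v : V} {a : ι → V} {s : Finset ι} {f : Module.Dual ℚ V} (hfv : f v ≤ 0)
    (hf : ∀ j ∈ s, 0 < f (a j))
    (hrel : ∀ (m : ℕ) (n : ι → ℕ), m • v + ∑ j ∈ s, n j • a j = 0 → ∀ j ∈ s, n j = 0)
    (n : ι → ℕ) (hn : ∑ j ∈ s, n j • (ℚ ∙ v).mkQ (a j) = 0) : ∀ j ∈ s, n j = 0 := by
  have hmem : ∑ j ∈ s, n j • a j ∈ ℚ ∙ v := by
    rw [← Submodule.Quotient.mk_eq_zero, ← Submodule.mkQ_apply, map_sum]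
    simpa only [map_nsmul] using hn
  obtain ⟨c, hc⟩ := Submodule.mem_span_singleton.mp hmem
  rcases le_total c 0 with hc0 | hc0
  · have key : (-c.num).toNat • v + ∑ j ∈ s, (c.den * n j) • a j = 0 := by
      have hden : ∑ j ∈ s, (c.den * n j) • a j = (c.num : ℚ) • v :=
        calc ∑ j ∈ s, (c.den * n j) • a j = c.den • (c • v) := by
              simp only [mul_smul, ← smul_sum, hc]
          _ = (c.num : ℚ) • v := by
            rw [← Nat.cast_smul_eq_nsmul ℚ, smul_smul, mul_comm, Rat.mul_den_eq_num]
      have hnum : ((-c.num).toNat : ℚ) = -c.num := by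
        have := Rat.num_nonpos.mpr hc0
        exact_mod_cast Int.toNat_of_nonneg (by omega)
      rw [hden, ← Nat.cast_smul_eq_nsmul ℚ, hnum, neg_smul, neg_add_cancel]
    intro j hj
    simpa [c.den_ne_zero] using hrel _ _ key j hj
  · have hsum : ∑ j ∈ s, (n j : ℚ) * f (a j) = c * f v := by
      rw [← smul_eq_mul c, ← map_smul, hc, map_sum]
      simp
    have hle : ∑ j ∈ s, (n j : ℚ) * f (a j) ≤ 0 := hsum ▸ mul_nonpos_of_nonneg_of_nonpos hc0 hfv
    have hzero := (sum_eq_zero_iff_of_nonneg fun j hj => by positivity [hf j hj]).mp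
      (hle.antisymm (sum_nonneg fun j hj => by positivity [hf j hj]))
    intro j hj
    simpa [(hf j hj).ne'] using hzero j hj

/-- Gordan's theorem over `ℚ`, with certificates in `ℕ`. -/
theorem exists_dual_forall_pos_of_nsmul_sum_eq_zero {V ι : Type*} [AddCommGroup V]
    [Module ℚ V] (a : ι → V) (s : Finset ι)
    (h : ∀ n : ι → ℕ, ∑ j ∈ s, n j • a j = 0 → ∀ j ∈ s, n j = 0) :
    ∃ f : Module.Dual ℚ V, ∀ j ∈ s, 0 < f (a j) := by
  classical
  induction s using Finset.induction_on generalizing V with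
  | empty => exact ⟨0, by simp⟩
  | insert j₀ s hj₀ ih =>
    have hrel : ∀ (m : ℕ) (n : ι → ℕ), m • a j₀ + ∑ j ∈ s, n j • a j = 0 →
        m = 0 ∧ ∀ j ∈ s, n j = 0 := by
      intro m n hmn
      have hupd : ∀ j ∈ s, Function.update n j₀ m j = n j := fun j hj =>
        Function.update_of_ne (ne_of_mem_of_not_mem hj hj₀) _ _
      have := h (Function.update n j₀ m) (by
        rwa [sum_insert hj₀, Function.update_self, sum_congr rfl fun j hj => by rw [hupd j hj]])
      rw [forall_mem_insert, Function.update_self] at this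
      exact ⟨this.1, fun j hj => hupd j hj ▸ this.2 j hj⟩
    obtain ⟨f, hf⟩ := ih a fun n hn => (hrel 0 n (by rwa [zero_smul, zero_add])).2
    by_cases hfv : 0 < f (a j₀)
    · exact ⟨f, forall_mem_insert _ _ _ |>.mpr ⟨hfv, hf⟩⟩
    obtain ⟨g, hg⟩ := ih ((ℚ ∙ a j₀).mkQ ∘ a) (forall_eq_zero_of_sum_nsmul_mkQ_eq_zero
      (not_lt.mp hfv) hf fun m n hmn => (hrel m n hmn).2)
    obtain ⟨φ, hφ⟩ := Module.Dual.exists_apply_pos (K := ℚ) (v := a j₀) fun h0 =>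
      one_ne_zero (hrel 1 0 (by simp [h0])).1
    obtain ⟨N, hN⟩ := s.exists_forall_pos_mul_add hg (φ ∘ a)
    refine ⟨N • (g ∘ₗ (ℚ ∙ a j₀).mkQ) + φ, forall_mem_insert _ _ _ |>.mpr ⟨?_, fun j hj => ?_⟩⟩
    · simpa [(Submodule.Quotient.mk_eq_zero _).mpr (Submodule.mem_span_singleton_self _)]
    · simpa using hN j hj

end Gordan

lemma exists_nsmul_eq_zero_of_one_tmul_eq_zero {G : Type*} [AddCommGroup G] {x : G}
    (h : (1 : ℚ) ⊗ₜ[ℤ] x = 0) : ∃ k : ℕ, k ≠ 0 ∧ k • x = 0 := by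
  obtain ⟨c, hc⟩ := (IsLocalizedModule.eq_zero_iff (nonZeroDivisors ℤ)
    (TensorProduct.mk ℤ ℚ G 1)).mp h
  refine ⟨(c : ℤ).natAbs, Int.natAbs_ne_zero.mpr (nonZeroDivisors.coe_ne_zero c), ?_⟩
  rw [Submonoid.smul_def] at hc
  rcases Int.natAbs_eq (c : ℤ) with h | h
  · rw [← natCast_zsmul, ← h, hc]
  · rw [← natCast_zsmul, ← neg_eq_iff_eq_neg.mpr h, neg_zsmul, hc, neg_zero]

lemma AddSubgroup.exists_sub_of_mem_closure_image {M N : Type*} [AddCommMonoid M]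
    [AddCommGroup N] (φ : M →+ N) (F : AddSubmonoid M) {x : N}
    (hx : x ∈ AddSubgroup.closure (φ '' F)) : ∃ f₁ ∈ F, ∃ f₂ ∈ F, x = φ f₁ - φ f₂ := by
  induction hx using AddSubgroup.closure_induction with
  | mem _ hx =>
    obtain ⟨f, hf, rfl⟩ := hx
    exact ⟨f, hf, 0, F.zero_mem, by simp⟩
  | zero => exact ⟨0, F.zero_mem, 0, F.zero_mem, by simp⟩
  | add _ _ _ _ hx hy =>
    obtain ⟨f₁, hf₁, f₂, hf₂, rfl⟩ := hx
    obtain ⟨g₁, hg₁, g₂, hg₂, rfl⟩ := hy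
    exact ⟨f₁ + g₁, F.add_mem hf₁ hg₁, f₂ + g₂, F.add_mem hf₂ hg₂, by simp only [map_add]; abel⟩
  | neg _ _ hx =>
    obtain ⟨f₁, hf₁, f₂, hf₂, rfl⟩ := hx
    exact ⟨f₂, hf₂, f₁, hf₁, neg_sub _ _⟩

section MonoidIdeal

variable {P : Type*} [AddCommMonoid P] {I : Set P}

lemma IsMonoidIdeal.nsmul_mem (hI : IsMonoidIdeal I) {p : P} (hp : p ∈ I) {k : ℕ}
    (hk : k ≠ 0) : k • p ∈ I := by
  obtain ⟨k, rfl⟩ := Nat.exists_eq_succ_of_ne_zero hk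
  rw [succ_nsmul']
  exact hI p hp _

lemma IsMonoidIdeal.sum_nsmul_mem (hI : IsMonoidIdeal I) {ι : Type*} {s : Finset ι}
    {n : ι → ℕ} {g : ι → P} {j : ι} (hj : j ∈ s) (hn : n j ≠ 0) (hg : g j ∈ I) :
    ∑ i ∈ s, n i • g i ∈ I := by
  classical
  rw [← Finset.add_sum_erase s _ hj]
  exact hI _ (hI.nsmul_mem hg hn) _

lemma IsPrimeMonoidIdeal.mem_or_mem_of_add_mem (hI : IsPrimeMonoidIdeal I) {p q : P}
    (h : p + q ∈ I) : p ∈ I ∨ q ∈ I := by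
  by_contra! hpq
  exact hI.2.2 p q hpq.1 hpq.2 h

def IsPrimeMonoidIdeal.primeCompl (hI : IsPrimeMonoidIdeal I) : AddSubmonoid P where
  carrier := Iᶜ
  add_mem' := hI.2.2 _ _
  zero_mem' := hI.2.1

end MonoidIdeal

namespace IsPrimeMonoidIdeal

variable {P : Type*} {I : Set P}

open Algebra in
theorem exists_addMonoidHom_rat_pos_on_finset [AddCancelCommMonoid P] (hI : IsPrimeMonoidIdeal I)
    (s : Finset P) : ∃ u : P →+ ℚ, (∀ p ∈ s, p ∈ I → 0 < u p) ∧ ∀ p ∉ I, u p = 0 := by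
  classical
  set H := AddSubgroup.closure (GrothendieckAddGroup.of '' (hI.primeCompl : Set P))
  set ι : P →+ ℚ ⊗[ℤ] (GrothendieckAddGroup P ⧸ H) :=
    (TensorProduct.mk ℤ ℚ _ 1).toAddMonoidHom.comp
      ((QuotientAddGroup.mk' H).comp GrothendieckAddGroup.of)
  have hι_compl : ∀ p ∉ I, ι p = 0 := fun p hp => by
    change (1 : ℚ) ⊗ₜ[ℤ] (GrothendieckAddGroup.of p : GrothendieckAddGroup P ⧸ H) = 0
    rw [(QuotientAddGroup.eq_zero_iff _).mpr (AddSubgroup.subset_closure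
      (Set.mem_image_of_mem _ (show p ∈ hI.primeCompl from hp))), TensorProduct.tmul_zero]
  have hι_ne_zero : ∀ q ∈ I, ι q ≠ 0 := by
    intro q hq hιq
    obtain ⟨k, hk, hkq⟩ := exists_nsmul_eq_zero_of_one_tmul_eq_zero
      (x := (GrothendieckAddGroup.of q : GrothendieckAddGroup P ⧸ H)) hιq
    rw [← QuotientAddGroup.mk_nsmul, ← map_nsmul, QuotientAddGroup.eq_zero_iff] at hkq
    obtain ⟨f₁, hf₁, f₂, hf₂, hf⟩ := AddSubgroup.exists_sub_of_mem_closure_image _ _ hkq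
    have : k • q + f₂ = f₁ := GrothendieckAddGroup.of_injective (by rw [map_add, hf]; abel)
    exact hf₁ (this ▸ hI.1 _ (hI.1.nsmul_mem hq hk) _)
  obtain ⟨f, hf⟩ := exists_dual_forall_pos_of_nsmul_sum_eq_zero ι (s.filter (· ∈ I))
    fun n hn p hp => by
    by_contra hnp
    refine hι_ne_zero _
      (hI.1.sum_nsmul_mem (g := fun p => p) hp hnp (Finset.mem_filter.mp hp).2) ?_
    simpa only [map_sum, map_nsmul] using hn
  exact ⟨f.toAddMonoidHom.comp ι, fun p hp hpI => hf p (Finset.mem_filter.mpr ⟨hp, hpI⟩),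
    fun p hp => by simp [hι_compl p hp]⟩

theorem pos_of_mem_of_closure_eq_top {M : Type*} [AddCommMonoid P] [AddCommMonoid M]
    [PartialOrder M] [IsOrderedCancelAddMonoid M] (hI : IsPrimeMonoidIdeal I) {S : Set P}
    (hS : AddSubmonoid.closure S = ⊤) (u : P →+ M) (hS_pos : ∀ s ∈ S, s ∈ I → 0 < u s)
    (h_compl : ∀ p ∉ I, u p = 0) {p : P} (hp : p ∈ I) : 0 < u p := by
  have hp_top : p ∈ AddSubmonoid.closure S := hS ▸ AddSubmonoid.mem_top p
  induction hp_top using AddSubmonoid.closure_induction with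
  | mem s hs => exact hS_pos s hs hp
  | zero => exact absurd hp hI.2.1
  | add p q _ _ ihp ihq =>
    have nonneg : ∀ x, (x ∈ I → 0 < u x) → 0 ≤ u x := fun x hx => by
      by_cases hxI : x ∈ I
      exacts [(hx hxI).le, (h_compl x hxI).ge]
    rw [map_add]
    rcases hI.mem_or_mem_of_add_mem hp with hpI | hqI
    · exact add_pos_of_pos_of_nonneg (ihp hpI) (nonneg q ihq)
    · exact add_pos_of_nonneg_of_pos (nonneg p ihp) (ihq hqI)

end IsPrimeMonoidIdeal

theorem exists_addMonoidHom_pos_on_prime_monoidIdeal_general {P : Type*} [AddCancelCommMonoid P]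
    [AddMonoid.FG P]
    (I : Set P) (hI : IsPrimeMonoidIdeal I) :
    ∃ u : P →+ ℝ≥0, (∀ p ∈ I, 0 < u p) ∧ ∀ p ∉ I, u p = 0 := by
  obtain ⟨S, hS⟩ := AddMonoid.FG.fg_top (M := P)
  obtain ⟨u, hS_pos, h_compl⟩ := hI.exists_addMonoidHom_rat_pos_on_finset S
  have hpos : ∀ p ∈ I, 0 < u p := fun p =>
    hI.pos_of_mem_of_closure_eq_top hS u hS_pos h_compl
  have hnonneg : ∀ p, 0 ≤ (u p : ℝ) := fun p => by
    by_cases hp : p ∈ I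
    exacts [mod_cast (hpos p hp).le, by simp [h_compl p hp]]
  refine ⟨{ toFun p := (u p : ℝ).toNNReal
            map_zero' := by simp
            map_add' p q := by simp [Real.toNNReal_add (hnonneg p) (hnonneg q)] },
    fun p hp => ?_, fun p hp => ?_⟩
  · simpa using hpos p hp
  · simp [h_compl p hp]

/-- Let `P` be a finitely generated, cancellative, torsion-free and saturated commutative
additive monoid and `I` a prime monoid ideal of `P`. Then there is an additive monoid
homomorphism `u : P → ℝ≥0` that is positive exactly on `I`. -/
theorem exists_addMonoidHom_pos_on_prime_monoidIdeal {P : Type*} [AddCancelCommMonoid P]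
    [AddMonoid.FG P]
    (htf : ∀ (n : ℕ) (a b : P), 0 < n → n • a = n • b → a = b)
    (hsat : ∀ (n : ℕ) (a b : P), 0 < n → (∃ c : P, n • a = n • b + c) → ∃ q : P, a = b + q)
    (I : Set P) (hI : IsPrimeMonoidIdeal I) :
    ∃ u : P →+ ℝ≥0, (∀ p ∈ I, 0 < u p) ∧ ∀ p ∉ I, u p = 0 :=
  exists_addMonoidHom_pos_on_prime_monoidIdeal_general I hI
end

section
/- Let A be a commutative ring and f a multiplicative ring seminorm on A (so f 0 = 0, f 1 = 1, f (a + b) ≤ f a + f b, and f (a · b) = f a · f b) such that f a ≤ 1 for all a ∈ A. Then f satisfies the ultrametric inequality: f (a + b) ≤ max (f a) (f b) for all a, b ∈ A. -/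
/-- If `x^n ≤ (n+1) * y^n` for all `n`, with `x, y ≥ 0`, then `x ≤ y`. -/
lemma le_of_pow_le_succ_mul_pow {x y : ℝ} (hx : 0 ≤ x) (hy : 0 ≤ y)
    (h : ∀ n : ℕ, x ^ n ≤ (n + 1) * y ^ n) : x ≤ y := by
  by_contra hlt
  push_neg at hlt
  have hx0 : 0 < x := lt_of_le_of_lt hy hlt
  have hr0 : 0 ≤ y / x := div_nonneg hy hx0.le
  have hr1 : y / x < 1 := (div_lt_one hx0).2 hlt
  have hten : Filter.Tendsto (fun n : ℕ => (n : ℝ) * (y / x) ^ n + (y / x) ^ n)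
      Filter.atTop (nhds 0) := by
    simpa using (tendsto_self_mul_const_pow_of_lt_one hr0 hr1).add
      (tendsto_pow_atTop_nhds_zero_of_lt_one hr0 hr1)
  have hone : ∀ n : ℕ, (1 : ℝ) ≤ (n : ℝ) * (y / x) ^ n + (y / x) ^ n := by
    intro n
    have := h n
    have hxn : 0 < x ^ n := pow_pos hx0 n
    rw [div_pow]
    calc (1:ℝ) ≤ ((n:ℝ) + 1) * y ^ n / x ^ n := (one_le_div hxn).2 this
      _ = (n : ℝ) * (y ^ n / x ^ n) + y ^ n / x ^ n := by ring
  have : (1 : ℝ) ≤ 0 := le_of_tendsto_of_tendsto' tendsto_const_nhds hten hone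
  linarith

/-- A multiplicative ring seminorm bounded by `1` on a commutative ring satisfies the
ultrametric inequality. -/
theorem mulRingSeminorm_isNonarchimedean_of_le_one {A : Type*} [CommRing A]
    (f : MulRingSeminorm A) (hf : ∀ a : A, f a ≤ 1) :
    ∀ a b : A, f (a + b) ≤ max (f a) (f b) := by
  intro a b
  set M : ℝ := max (f a) (f b) with hMdef
  have hM0 : 0 ≤ M := le_max_of_le_left (apply_nonneg f a)
  have hfa : f a ≤ M := le_max_left _ _
  have hfb : f b ≤ M := le_max_right _ _
  have hsum : ∀ (m : ℕ) (g : ℕ → A),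
      f (∑ i ∈ Finset.range m, g i) ≤ ∑ i ∈ Finset.range m, f (g i) := by
    intro m g
    induction m with
    | zero => simp
    | succ m ih =>
      rw [Finset.sum_range_succ, Finset.sum_range_succ]
      exact le_trans (map_add_le_add f _ _) (add_le_add ih le_rfl)
  apply le_of_pow_le_succ_mul_pow (apply_nonneg f _) hM0
  intro n
  calc f (a + b) ^ n = f ((a + b) ^ n) := (map_pow f _ n).symm
    _ = f (∑ k ∈ Finset.range (n + 1), a ^ k * b ^ (n - k) * (n.choose k : A)) := by
          rw [add_pow]
    _ ≤ ∑ k ∈ Finset.range (n + 1), f (a ^ k * b ^ (n - k) * (n.choose k : A)) := hsum _ _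
    _ ≤ ∑ k ∈ Finset.range (n + 1), M ^ n := by
          apply Finset.sum_le_sum
          intro k hk
          rw [Finset.mem_range] at hk
          have h1 : f (a ^ k * b ^ (n - k) * (n.choose k : A))
              = f a ^ k * f b ^ (n - k) * f (n.choose k : A) := by
            rw [map_mul, map_mul, map_pow, map_pow]
          rw [h1]
          calc f a ^ k * f b ^ (n - k) * f (n.choose k : A)
              ≤ M ^ k * M ^ (n - k) * 1 := by
                apply mul_le_mul
                · exact mul_le_mul (pow_le_pow_left₀ (apply_nonneg f a) hfa k)
                    (pow_le_pow_left₀ (apply_nonneg f b) hfb _)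
                    (pow_nonneg (apply_nonneg f b) _) (pow_nonneg hM0 _)
                · exact hf _
                · exact apply_nonneg f _
                · positivity
            _ = M ^ n := by
                rw [mul_one, ← pow_add, Nat.add_sub_cancel' (Nat.lt_succ_iff.mp hk)]
    _ = (n + 1) * M ^ n := by
          rw [Finset.sum_const, Finset.card_range, nsmul_eq_mul, Nat.cast_add, Nat.cast_one]
end
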